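/- Let R be a commutative ring and let A = A(R,C) be an evolution algebra with basis (x_i)_{i∈ι} and structure coefficients C. Let Z = { i ∈ ι : C(k,i) = 0 for all k } and let ι' = ι \ Z. Let C' : ι' → ι' → R be the restriction of C to rows and columns in ι' (so A(R,C') is the quotient algebra A/I_1, where I_1 = span{ x_i : i ∈ Z }). Then A(R,C) is nilpotent if and only if A(R,C') is nilpotent. (Lemma 2.5) -/
import Mathlib


/-!
Evolution algebra over a commutative ring `R` with basis `(x_i)_{i ∈ ι}`:
the underlying module is `ι →₀ R` (with `x_i = Finsupp.single i 1`), and the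
structure coefficients are encoded by `Csq : ι → ι →₀ R`, where `Csq i` is the
element `x_i · x_i = ∑_k C(k,i) • x_k`; thus `C k i = Csq i k` and
"`C(k,i) = 0` for all `k`" is equivalent to `Csq i = 0`.
The product is `(a · b) = ∑_i (a i * b i) • Csq i`.
-/
noncomputable def evolMul {R : Type*} [CommRing R] {ι : Type*}
    (Csq : ι → ι →₀ R) (a b : ι →₀ R) : ι →₀ R :=
  a.sum fun i ai => (ai * b i) • Csq i

/-- Left-normed products: `lnp mul f m = ((f 0 · f 1) · f 2) ⋯ · f m`
is the left-normed product of the `m + 1` elements `f 0, …, f m`. -/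
def lnp {A : Type*} (mul : A → A → A) (f : ℕ → A) : ℕ → A
  | 0 => f 0
  | m + 1 => mul (lnp mul f m) (f (m + 1))

section Aux
variable {R : Type*} [CommRing R] {ι : Type*} (Csq : ι → ι →₀ R)

lemma evolMul_key (a b : ι →₀ R) :
    Finsupp.subtypeDomain (fun j : ι => Csq j ≠ 0) (evolMul Csq a b) =
    evolMul (fun i : {i : ι // Csq i ≠ 0} =>
        Finsupp.subtypeDomain (fun j : ι => Csq j ≠ 0) (Csq i.1))
      (a.subtypeDomain _) (b.subtypeDomain _) := by
  classical
  unfold evolMul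
  rw [Finsupp.sum, Finsupp.sum, Finsupp.subtypeDomain_sum, Finsupp.support_subtypeDomain]
  refine Eq.trans ?_ (Finset.sum_subtype_eq_sum_filter
    (fun j : ι => (a j * b j) • Finsupp.subtypeDomain (fun j : ι => Csq j ≠ 0) (Csq j))).symm
  rw [Finset.sum_filter]
  refine Finset.sum_congr rfl fun i hi => ?_
  by_cases h : Csq i ≠ 0
  · rw [if_pos h]
    ext k
    simp [Finsupp.smul_apply]
  · rw [if_neg h]
    push_neg at h
    simp [h]

lemma evolMul_zero_of (a b : ι →₀ R) (h : ∀ i, Csq i ≠ 0 → a i = 0) :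
    evolMul Csq a b = 0 := by
  unfold evolMul
  rw [Finsupp.sum]
  apply Finset.sum_eq_zero
  intro i _
  by_cases hc : Csq i ≠ 0
  · rw [h i hc]; simp
  · push_neg at hc; simp [hc]

lemma lnp_subtypeDomain (f : ℕ → (ι →₀ R)) (m : ℕ) :
    Finsupp.subtypeDomain (fun j : ι => Csq j ≠ 0) (lnp (evolMul Csq) f m) =
    lnp (evolMul fun i : {i : ι // Csq i ≠ 0} =>
        Finsupp.subtypeDomain (fun j : ι => Csq j ≠ 0) (Csq i.1))
      (fun k => (f k).subtypeDomain _) m := by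
  induction m with
  | zero => rfl
  | succ m ih => rw [lnp, lnp, evolMul_key, ih]

end Aux

/-- Lemma 2.5: Let `Z = { i : C(k,i) = 0 ∀k } = { i : Csq i = 0 }`,
`ι' = ι \ Z = { i : Csq i ≠ 0 }`, and let `C'` be the restriction of `C` to
rows and columns in `ι'` (so `A(R,C')` is the quotient `A/I₁` with
`I₁ = span{ x_i : i ∈ Z }`); here `Csq' i = (Csq i).subtypeDomain _`.
Then `A(R,C)` is nilpotent iff `A(R,C')` is nilpotent. -/
theorem nilpotent_iff_quotient_nilpotent {R : Type*} [CommRing R] {ι : Type*}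
    (Csq : ι → ι →₀ R) :
    (∃ n : ℕ, 2 ≤ n ∧ ∀ f : ℕ → (ι →₀ R), lnp (evolMul Csq) f (n - 1) = 0) ↔
    (∃ n : ℕ, 2 ≤ n ∧ ∀ f : ℕ → ({i : ι // Csq i ≠ 0} →₀ R),
      lnp (evolMul fun i : {i : ι // Csq i ≠ 0} =>
        Finsupp.subtypeDomain (fun j : ι => Csq j ≠ 0) (Csq i.1)) f (n - 1) = 0) := by
  classical
  constructor
  · rintro ⟨n, hn, h⟩
    refine ⟨n, hn, fun f => ?_⟩
    have := h (fun k => (f k).extendDomain)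
    have h2 := congrArg (Finsupp.subtypeDomain (fun j : ι => Csq j ≠ 0)) this
    rw [lnp_subtypeDomain] at h2
    simpa [Finsupp.subtypeDomain_extendDomain] using h2
  · rintro ⟨n, hn, h⟩
    refine ⟨n + 1, by omega, fun f => ?_⟩
    have hn1 : n + 1 - 1 = (n - 1) + 1 := by omega
    rw [hn1, lnp]
    apply evolMul_zero_of
    intro i hi
    have h2 := lnp_subtypeDomain Csq f (n - 1)
    rw [h _] at h2
    have := congrArg (fun g : {i : ι // Csq i ≠ 0} →₀ R => g ⟨i, hi⟩) h2
    simpa using this
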